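/- arXiv:math/0403421 — 2 statements merged into one kernel-verified Lean document; each statement's English description precedes it below -/
import Mathlib

section
/- Let A, B, C be graded finite-dimensional vector spaces concentrated in degrees 0 through N, with graded maps α : A → B, β : B → C, connecting maps ∂ₙ : Cₙ → A_{n−1}, and graded self-maps f, g, h of A, B, C respectively, such that the long sequence 0 → A_N → B_N → C_N → A_{N−1} → ⋯ → A_0 → B_0 → C_0 → 0 is exact and all squares involving f, g, h commute. Then the alternating sums of traces satisfy L(g) = L(f) + L(h), where L(f) = Σₙ (−1)ⁿ Tr(fₙ). -/
open LinearMap Submodule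

section Aux

variable {F : Type*} [Field F]

lemma trace_of_subsingleton {M : Type*} [AddCommGroup M] [Module F M] [Subsingleton M]
    (f : Module.End F M) : LinearMap.trace F M f = 0 := by
  rw [Subsingleton.elim f 0, map_zero]

lemma trace_prod_decomp {M N : Type*} [AddCommGroup M] [Module F M]
    [AddCommGroup N] [Module F N] [FiniteDimensional F M] [FiniteDimensional F N]
    (T : Module.End F (M × N)) :
    LinearMap.trace F (M × N) T
      = LinearMap.trace F M (fst F M N ∘ₗ T ∘ₗ inl F M N)
        + LinearMap.trace F N (snd F M N ∘ₗ T ∘ₗ inr F M N) := by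
  have hT : T = (inl F M N ∘ₗ (fst F M N ∘ₗ T)) + (inr F M N ∘ₗ (snd F M N ∘ₗ T)) := by
    ext x <;> simp
  conv_lhs => rw [hT]
  rw [map_add, trace_comp_comm' (fst F M N ∘ₗ T) (inl F M N),
    trace_comp_comm' (snd F M N ∘ₗ T) (inr F M N), comp_assoc, comp_assoc]

lemma trace_split {V W : Type*} [AddCommGroup V] [Module F V] [FiniteDimensional F V]
    [AddCommGroup W] [Module F W] [FiniteDimensional F W]
    (φ : V →ₗ[F] W) (f : Module.End F V) (g : Module.End F W)
    (hc : φ ∘ₗ f = g ∘ₗ φ) (p : Submodule F W) (hp : LinearMap.range φ = p)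
    (hgp : ∀ x ∈ p, g x ∈ p)
    (hfk : ∀ x ∈ LinearMap.ker φ, f x ∈ LinearMap.ker φ) :
    LinearMap.trace F V f
      = LinearMap.trace F (LinearMap.ker φ) (f.restrict hfk)
        + LinearMap.trace F p (g.restrict hgp) := by
  have hcx : ∀ x : V, φ (f x) = g (φ x) := fun x => LinearMap.congr_fun hc x
  obtain ⟨q, hq⟩ := Submodule.exists_isCompl (LinearMap.ker φ)
  set e : (LinearMap.ker φ × q) ≃ₗ[F] V := Submodule.prodEquivOfIsCompl _ q hq with he
  have htr : LinearMap.trace F V f = LinearMap.trace F _ (e.symm.conj f) :=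
    (LinearMap.trace_conj' f e.symm).symm
  rw [htr, trace_prod_decomp]
  congr 1
  · -- the kernel block
    congr 1
    ext x
    have hfx : f ↑x ∈ LinearMap.ker φ := hfk _ x.2
    have h1 : e.symm (f ↑x) = (⟨f ↑x, hfx⟩, 0) := by
      apply e.injective
      rw [e.apply_symm_apply]
      simp [he, Submodule.coe_prodEquivOfIsCompl']
    have h2 : e (inl F _ _ x) = (x : V) := by
      simp [he, Submodule.coe_prodEquivOfIsCompl']
    simp only [LinearEquiv.conj_apply, coe_comp, Function.comp_apply, LinearEquiv.coe_coe,
      LinearEquiv.symm_symm, LinearMap.fst_apply]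
    rw [h2, h1]
    simp [LinearMap.restrict_apply]
  · -- the image block
    set ψ : q ≃ₗ[F] p :=
      (Submodule.quotientEquivOfIsCompl (LinearMap.ker φ) q hq).symm.trans
        ((φ.quotKerEquivRange).trans (LinearEquiv.ofEq _ _ hp)) with hψ
    have hψcoe : ∀ y : q, (ψ y : W) = φ ↑y := by
      intro y
      simp [hψ, Submodule.quotientEquivOfIsCompl_symm_apply,
        LinearMap.quotKerEquivRange_apply_mk]
    have key : ψ.conj (snd F _ _ ∘ₗ (e.symm.conj f) ∘ₗ inr F _ _) = g.restrict hgp := by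
      ext x
      set y : q := ψ.symm x with hy
      have hxy : (x : W) = φ ↑y := by rw [← hψcoe y, hy, ψ.apply_symm_apply]
      simp only [LinearEquiv.conj_apply, coe_comp, Function.comp_apply, LinearEquiv.coe_coe,
        LinearEquiv.symm_symm, LinearMap.snd_apply]
      have h2 : e (inr F _ _ y) = (y : V) := by
        simp [he, Submodule.coe_prodEquivOfIsCompl']
      rw [hψcoe, h2]
      set z := e.symm (f ↑y) with hz
      have hdecomp : (↑z.1 : V) + ↑z.2 = f ↑y := by
        have : e z = f ↑y := by rw [hz, e.apply_symm_apply]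
        rw [← this]; simp [he, Submodule.coe_prodEquivOfIsCompl']
      have hφz : φ ↑z.2 = φ (f ↑y) := by
        have hk : φ (↑z.1 : V) = 0 := z.1.2
        calc φ ↑z.2 = φ (↑z.1 + ↑z.2) := by rw [map_add, hk, zero_add]
        _ = φ (f ↑y) := by rw [hdecomp]
      rw [hφz, hcx, LinearMap.restrict_apply]
      simp [hxy]
    rw [← key, LinearMap.trace_conj']

lemma trace_restrict_top {W : Type*} [AddCommGroup W] [Module F W] [FiniteDimensional F W]
    (g : Module.End F W) (hgp : ∀ x ∈ (⊤ : Submodule F W), g x ∈ (⊤ : Submodule F W)) :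
    LinearMap.trace F (⊤ : Submodule F W) (g.restrict hgp) = LinearMap.trace F W g := by
  have : (Submodule.topEquiv (R := F) (M := W)).conj (g.restrict hgp) = g := by
    ext x; simp [LinearEquiv.conj_apply, LinearMap.restrict_apply]
  rw [← LinearMap.trace_conj' (g.restrict hgp) Submodule.topEquiv, this]

end Aux

lemma telescope_sum {F : Type*} [Field F] (N : ℕ) (tA tB tC x y z : ℕ → F)
    (hA : ∀ n, n ≤ N → tA n = x n + y n)
    (hB0 : tB 0 = y 0 + tC 0)
    (hB : ∀ n, n < N → tB (n + 1) = y (n + 1) + z n)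
    (hC : ∀ n, n < N → tC (n + 1) = z n + x n)
    (hxN : x N = 0) :
    ∑ n ∈ Finset.range (N + 1), (-1 : F) ^ n * tB n =
      ∑ n ∈ Finset.range (N + 1), (-1 : F) ^ n * tA n +
        ∑ n ∈ Finset.range (N + 1), (-1 : F) ^ n * tC n := by
  have hBsum : ∑ n ∈ Finset.range (N + 1), (-1 : F) ^ n * tB n
      = (∑ n ∈ Finset.range N, ((-1 : F) ^ (n + 1) * y (n + 1) + (-1 : F) ^ (n + 1) * z n))
        + (y 0 + tC 0) := by
    rw [Finset.sum_range_succ']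
    congr 1
    · exact Finset.sum_congr rfl fun n hn => by
        rw [hB n (Finset.mem_range.mp hn), mul_add]
    · simp [hB0]
  have hCsum : ∑ n ∈ Finset.range (N + 1), (-1 : F) ^ n * tC n
      = (∑ n ∈ Finset.range N, ((-1 : F) ^ (n + 1) * z n + (-1 : F) ^ (n + 1) * x n))
        + tC 0 := by
    rw [Finset.sum_range_succ']
    congr 1
    · exact Finset.sum_congr rfl fun n hn => by
        rw [hC n (Finset.mem_range.mp hn), mul_add]
    · simp
  have hAsum : ∑ n ∈ Finset.range (N + 1), (-1 : F) ^ n * tA n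
      = (∑ n ∈ Finset.range (N + 1), (-1 : F) ^ n * x n)
        + ∑ n ∈ Finset.range (N + 1), (-1 : F) ^ n * y n := by
    rw [← Finset.sum_add_distrib]
    exact Finset.sum_congr rfl fun n hn => by
      rw [hA n (Nat.lt_succ_iff.mp (Finset.mem_range.mp hn)), mul_add]
  have hxsum : ∑ n ∈ Finset.range (N + 1), (-1 : F) ^ n * x n
      = ∑ n ∈ Finset.range N, (-1 : F) ^ n * x n := by
    rw [Finset.sum_range_succ, hxN, mul_zero, add_zero]
  have hysum : ∑ n ∈ Finset.range (N + 1), (-1 : F) ^ n * y n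
      = (∑ n ∈ Finset.range N, (-1 : F) ^ (n + 1) * y (n + 1)) + y 0 := by
    rw [Finset.sum_range_succ']
    simp
  have hcancel : (∑ n ∈ Finset.range N, (-1 : F) ^ n * x n)
      + ∑ n ∈ Finset.range N, (-1 : F) ^ (n + 1) * x n = 0 := by
    rw [← Finset.sum_add_distrib]
    apply Finset.sum_eq_zero
    intro n _
    rw [pow_succ]
    ring
  rw [hBsum, hAsum, hCsum, hxsum, hysum, Finset.sum_add_distrib, Finset.sum_add_distrib]
  linear_combination -hcancel

/-- Let `A, B, C` be graded finite-dimensional vector spaces concentrated in degrees `0` through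
`N`, with graded maps `α : A → B`, `β : B → C`, connecting maps `dₙ : C (n+1) → A n`, and graded
self-maps `f, g, h` of `A, B, C` respectively, such that the long sequence
`0 → A_N → B_N → C_N → A_{N-1} → ⋯ → A_0 → B_0 → C_0 → 0` is exact and all squares involving
`f, g, h` commute.  Then the alternating sums of traces (Lefschetz numbers) satisfy
`L(g) = L(f) + L(h)`. -/
theorem lefschetz_additive_of_longExact
    {F : Type*} [Field F] (N : ℕ)
    (A B C : ℕ → Type*)
    [∀ n, AddCommGroup (A n)] [∀ n, Module F (A n)] [∀ n, FiniteDimensional F (A n)]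
    [∀ n, AddCommGroup (B n)] [∀ n, Module F (B n)] [∀ n, FiniteDimensional F (B n)]
    [∀ n, AddCommGroup (C n)] [∀ n, Module F (C n)] [∀ n, FiniteDimensional F (C n)]
    (hAtop : ∀ n, N < n → Subsingleton (A n))
    (hBtop : ∀ n, N < n → Subsingleton (B n))
    (hCtop : ∀ n, N < n → Subsingleton (C n))
    (α : ∀ n, A n →ₗ[F] B n) (β : ∀ n, B n →ₗ[F] C n) (d : ∀ n, C (n + 1) →ₗ[F] A n)
    (f : ∀ n, Module.End F (A n)) (g : ∀ n, Module.End F (B n)) (h : ∀ n, Module.End F (C n))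
    -- exactness of the long sequence
    (hexB : ∀ n, LinearMap.range (α n) = LinearMap.ker (β n))
    (hexC : ∀ n, LinearMap.range (β (n + 1)) = LinearMap.ker (d n))
    (hexA : ∀ n, LinearMap.range (d n) = LinearMap.ker (α n))
    (hinj : Function.Injective (α N))
    (hsurj : Function.Surjective (β 0))
    -- commutativity of all squares
    (hsqα : ∀ n, α n ∘ₗ f n = g n ∘ₗ α n)
    (hsqβ : ∀ n, β n ∘ₗ g n = h n ∘ₗ β n)
    (hsqd : ∀ n, d n ∘ₗ h (n + 1) = f n ∘ₗ d n) :
    ∑ n ∈ Finset.range (N + 1), (-1 : F) ^ n * LinearMap.trace F (B n) (g n) =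
      ∑ n ∈ Finset.range (N + 1), (-1 : F) ^ n * LinearMap.trace F (A n) (f n) +
        ∑ n ∈ Finset.range (N + 1), (-1 : F) ^ n * LinearMap.trace F (C n) (h n) := by
  have hfk : ∀ n, ∀ v ∈ LinearMap.ker (α n), f n v ∈ LinearMap.ker (α n) := by
    intro n v hv
    have hv0 : α n v = 0 := hv
    have := LinearMap.congr_fun (hsqα n) v
    simp only [LinearMap.coe_comp, Function.comp_apply] at this
    simp only [LinearMap.mem_ker, this, hv0, map_zero]
  have hgk : ∀ n, ∀ v ∈ LinearMap.ker (β n), g n v ∈ LinearMap.ker (β n) := by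
    intro n v hv
    have hv0 : β n v = 0 := hv
    have := LinearMap.congr_fun (hsqβ n) v
    simp only [LinearMap.coe_comp, Function.comp_apply] at this
    simp only [LinearMap.mem_ker, this, hv0, map_zero]
  have hhk : ∀ n, ∀ v ∈ LinearMap.ker (d n), h (n + 1) v ∈ LinearMap.ker (d n) := by
    intro n v hv
    have hv0 : d n v = 0 := hv
    have := LinearMap.congr_fun (hsqd n) v
    simp only [LinearMap.coe_comp, Function.comp_apply] at this
    simp only [LinearMap.mem_ker, this, hv0, map_zero]
  set x : ℕ → F := fun n => LinearMap.trace F _ ((f n).restrict (hfk n)) with hx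
  set y : ℕ → F := fun n => LinearMap.trace F _ ((g n).restrict (hgk n)) with hy
  set z : ℕ → F := fun n => LinearMap.trace F _ ((h (n + 1)).restrict (hhk n)) with hz
  apply telescope_sum N _ _ _ x y z
  · intro n _
    exact trace_split (α n) (f n) (g n) (hsqα n) _ (hexB n) (hgk n) (hfk n)
  · have h0 := trace_split (β 0) (g 0) (h 0) (hsqβ 0) ⊤
      (LinearMap.range_eq_top.mpr hsurj) (fun v _ => Submodule.mem_top) (hgk 0)
    rw [h0, trace_restrict_top]
  · intro n _
    exact trace_split (β (n + 1)) (g (n + 1)) (h (n + 1)) (hsqβ (n + 1)) _ (hexC n)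
      (hhk n) (hgk (n + 1))
  · intro n _
    exact trace_split (d n) (h (n + 1)) (f n) (hsqd n) _ (hexA n) (hfk n) (hhk n)
  · have : Subsingleton (LinearMap.ker (α N)) :=
      Submodule.subsingleton_iff_eq_bot.mpr (LinearMap.ker_eq_bot.mpr hinj)
    exact trace_of_subsingleton _
end

section
/- If λ is an integer-valued function on self-maps of spaces in 𝒞 satisfying the Homotopy, Cofibration, and Commutativity axioms, then λ of any constant self-map c : X → X is zero. -/
open CategoryTheory AlgebraicTopology

section Homology

noncomputable def SingularChains (X : Type) [TopologicalSpace X] :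
    ChainComplex (ModuleCat ℚ) ℕ :=
  (alternatingFaceMapComplex (ModuleCat ℚ)).obj
    (((SimplicialObject.whiskering _ _).obj (ModuleCat.free ℚ)).obj
      (TopCat.toSSet.obj (TopCat.of X)))

noncomputable def SingularChainsMap {X Y : Type} [TopologicalSpace X] [TopologicalSpace Y]
    (f : C(X, Y)) : SingularChains X ⟶ SingularChains Y :=
  (alternatingFaceMapComplex (ModuleCat ℚ)).map
    (((SimplicialObject.whiskering _ _).obj (ModuleCat.free ℚ)).map
      (TopCat.toSSet.map (TopCat.ofHom f)))

lemma SingularChainsMap_comp {X Y Z : Type} [TopologicalSpace X] [TopologicalSpace Y]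
    [TopologicalSpace Z] (f : C(X, Y)) (g : C(Y, Z)) :
    SingularChainsMap (g.comp f) = SingularChainsMap f ≫ SingularChainsMap g := by
  simp only [SingularChainsMap, TopCat.ofHom_comp, Functor.map_comp]
  rfl

noncomputable def SingularHomology (X : Type) [TopologicalSpace X] (n : ℕ) : ModuleCat ℚ :=
  (SingularChains X).homology n

noncomputable def SingularHomologyMap {X Y : Type} [TopologicalSpace X] [TopologicalSpace Y]
    (f : C(X, Y)) (n : ℕ) : SingularHomology X n ⟶ SingularHomology Y n :=
  HomologicalComplex.homologyMap (SingularChainsMap f) n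

noncomputable def LefschetzNumber {X : Type} [TopologicalSpace X] (f : C(X, X)) : ℚ :=
  ∑ᶠ n : ℕ, (-1 : ℚ) ^ n * LinearMap.trace ℚ (SingularHomology X n) (SingularHomologyMap f n).hom

noncomputable def ReducedLefschetzNumber {X : Type} [TopologicalSpace X] (f : C(X, X)) : ℚ :=
  LefschetzNumber f - 1

end Homology

section Polyhedra

def IsFinitePolyhedron (X : Type) [TopologicalSpace X] : Prop :=
  ∃ (m : ℕ) (K : Geometry.SimplicialComplex ℝ (EuclideanSpace ℝ (Fin m))),
    K.faces.Finite ∧ Nonempty (X ≃ₜ K.space)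

def IsPolyhedralPair (X : Type) [TopologicalSpace X] (A : Set X) : Prop :=
  ∃ (m : ℕ) (K L : Geometry.SimplicialComplex ℝ (EuclideanSpace ℝ (Fin m))),
    K.faces.Finite ∧ L.faces ⊆ K.faces ∧
      ∃ e : X ≃ₜ K.space, Subtype.val '' (e '' A) = L.space

def InC (X : Type) [TopologicalSpace X] : Prop :=
  ConnectedSpace X ∧ ∃ (Y : Type) (_ : TopologicalSpace Y),
    IsFinitePolyhedron Y ∧ Nonempty (ContinuousMap.HomotopyEquiv X Y)

end Polyhedra

section Quotients

def restrictSelf {X : Type} [TopologicalSpace X] (f : C(X, X)) (A : Set X)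
    (h : Set.MapsTo f A A) : C(A, A) :=
  ⟨h.restrict f A A, f.continuous.restrict h⟩

def collapseSetoid (X : Type) (A : Set X) : Setoid X where
  r x y := x = y ∨ (x ∈ A ∧ y ∈ A)
  iseqv := by
    refine ⟨fun x => Or.inl rfl, ?_, ?_⟩
    · rintro x y (rfl | ⟨h1, h2⟩)
      · exact Or.inl rfl
      · exact Or.inr ⟨h2, h1⟩
    · rintro x y z (rfl | ⟨h1, h2⟩) (rfl | ⟨h3, h4⟩)
      · exact Or.inl rfl
      · exact Or.inr ⟨h3, h4⟩
      · exact Or.inr ⟨h1, h2⟩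
      · exact Or.inr ⟨h1, h4⟩

def Collapse (X : Type) [TopologicalSpace X] (A : Set X) : Type :=
  Quotient (collapseSetoid X A)

instance (X : Type) [TopologicalSpace X] (A : Set X) : TopologicalSpace (Collapse X A) :=
  instTopologicalSpaceQuotient

def collapseProj (X : Type) [TopologicalSpace X] (A : Set X) : C(X, Collapse X A) :=
  ⟨Quotient.mk _, continuous_quotient_mk'⟩

def collapseMap {X : Type} [TopologicalSpace X] {A : Set X} (f : C(X, X))
    (h : Set.MapsTo f A A) : C(Collapse X A, Collapse X A) := by
  refine ⟨Quotient.map f ?_, ?_⟩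
  · rintro x y (rfl | ⟨h1, h2⟩)
    · exact Or.inl rfl
    · exact Or.inr ⟨h h1, h h2⟩
  · exact continuous_quotient_mk'.comp f.continuous |>.quotient_lift _

end Quotients

section Wedge

def Wedge (k : ℕ) (S : Type) [TopologicalSpace S] (s₀ : S) : Type :=
  {v : Fin k → S // ∀ i j : Fin k, v i ≠ s₀ → v j ≠ s₀ → i = j}

instance (k : ℕ) (S : Type) [TopologicalSpace S] (s₀ : S) :
    TopologicalSpace (Wedge k S s₀) :=
  instTopologicalSpaceSubtype

def wedgePt (k : ℕ) (S : Type) [TopologicalSpace S] (s₀ : S) : Wedge k S s₀ :=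
  ⟨fun _ => s₀, fun _ _ hi _ => absurd rfl hi⟩

def wedgeIncl (k : ℕ) (S : Type) [TopologicalSpace S] (s₀ : S) (j : Fin k) :
    C(S, Wedge k S s₀) := by
  refine ⟨fun z => ⟨Function.update (fun _ => s₀) j z, ?_⟩, ?_⟩
  · intro i i' hi hi'
    have h1 : i = j := by
      by_contra h
      exact hi (Function.update_of_ne h _ _)
    have h2 : i' = j := by
      by_contra h
      exact hi' (Function.update_of_ne h _ _)
    rw [h1, h2]
  · refine Continuous.subtype_mk (continuous_pi fun i => ?_) _
    rcases eq_or_ne i j with rfl | h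
    · simpa using continuous_id'
    · simpa [Function.update_of_ne h] using
        (continuous_const : Continuous fun _ : S => s₀)

def wedgeProj (k : ℕ) (S : Type) [TopologicalSpace S] (s₀ : S) (j : Fin k) :
    C(Wedge k S s₀, S) :=
  ⟨fun v => v.1 j, (continuous_apply j).comp continuous_subtype_val⟩

noncomputable def circleDeg (f : C(Circle, Circle)) : ℚ :=
  LinearMap.trace ℚ (SingularHomology Circle 1) (SingularHomologyMap f 1).hom

def nSphere (n : ℕ) : Type := Metric.sphere (0 : EuclideanSpace ℝ (Fin (n + 1))) 1

noncomputable instance (n : ℕ) : TopologicalSpace (nSphere n) := by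
  unfold nSphere; infer_instance

noncomputable def spherePt (n : ℕ) : nSphere n :=
  ⟨EuclideanSpace.single 0 1, by simp [EuclideanSpace.norm_single]⟩

noncomputable def sphereDeg (n : ℕ) (f : C(nSphere n, nSphere n)) : ℚ :=
  LinearMap.trace ℚ (SingularHomology (nSphere n) n) (SingularHomologyMap f n).hom

/-- the wedge of `k` circles, with the circle realized as the unit circle in `ℂ`
with basepoint `1` -/
noncomputable def WedgeCircles (k : ℕ) : Type := Wedge k Circle 1

noncomputable instance (k : ℕ) : TopologicalSpace (WedgeCircles k) :=
  instTopologicalSpaceSubtype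

end Wedge

section Axioms

def HomotopyAxiom (lam : ∀ (X : Type) [TopologicalSpace X], C(X, X) → ℚ) : Prop :=
  ∀ (X : Type) [TopologicalSpace X], InC X →
    ∀ f g : C(X, X), ContinuousMap.Homotopic f g → lam X f = lam X g

def CofibrationAxiom (lam : ∀ (X : Type) [TopologicalSpace X], C(X, X) → ℚ) : Prop :=
  ∀ (X : Type) [TopologicalSpace X] (A : Set X), InC X → InC A → IsPolyhedralPair X A →
    ∀ (f : C(X, X)) (hf : Set.MapsTo f A A),
      lam X f = lam A (restrictSelf f A hf) + lam (Collapse X A) (collapseMap f hf)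

def CommutativityAxiom (lam : ∀ (X : Type) [TopologicalSpace X], C(X, X) → ℚ) : Prop :=
  ∀ (X Y : Type) [TopologicalSpace X] [TopologicalSpace Y], InC X → InC Y →
    ∀ (f : C(X, Y)) (g : C(Y, X)), lam X (g.comp f) = lam Y (f.comp g)

def WedgeCirclesAxiom (lam : ∀ (X : Type) [TopologicalSpace X], C(X, X) → ℚ) : Prop :=
  ∀ k : ℕ, 1 ≤ k → ∀ f : C(Wedge k Circle 1, Wedge k Circle 1),
    lam (Wedge k Circle 1) f =
      -(∑ j : Fin k,
          circleDeg ((wedgeProj k Circle 1 j).comp (f.comp (wedgeIncl k Circle 1 j))))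

/-- view an integer-valued function on self-maps as a rational-valued one -/
def intValued (lam : ∀ (X : Type) [TopologicalSpace X], C(X, X) → ℤ) :
    ∀ (X : Type) [TopologicalSpace X], C(X, X) → ℚ :=
  fun X _ f => (lam X f : ℚ)

end Axioms

section Susp

def Susp (X : Type) [TopologicalSpace X] (x₀ : X) : Type :=
  Collapse (X × unitInterval) {p : X × unitInterval | p.2 = 0 ∨ p.2 = 1 ∨ p.1 = x₀}

instance (X : Type) [TopologicalSpace X] (x₀ : X) : TopologicalSpace (Susp X x₀) :=
  instTopologicalSpaceQuotient

def suspMap {X : Type} [TopologicalSpace X] {x₀ : X} (f : C(X, X)) (hf : f x₀ = x₀) :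
    C(Susp X x₀, Susp X x₀) := by
  refine collapseMap (f.prodMap (ContinuousMap.id unitInterval)) ?_
  rintro ⟨x, t⟩ (h | h | h)
  · exact Or.inl h
  · exact Or.inr (Or.inl h)
  · refine Or.inr (Or.inr ?_)
    show f x = x₀
    rw [show x = x₀ from h, hf]

end Susp

section Index

structure FixedPointIndexTheory where
  /-- the fixed point index `i(X, f, U)` -/
  index : ∀ (X : Type) [TopologicalSpace X], C(X, X) → Set X → ℤ
  /-- Homotopy property -/
  homotopy : ∀ (X : Type) [TopologicalSpace X], IsFinitePolyhedron X →
    ∀ f g : C(X, X), f.Homotopic g → index X f Set.univ = index X g Set.univ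
  /-- a map with no fixed points in `U` has index zero on `U` -/
  noFix : ∀ (X : Type) [TopologicalSpace X], IsFinitePolyhedron X →
    ∀ (f : C(X, X)) (U : Set X), IsOpen U → (∀ x ∈ U, f x ≠ x) → index X f U = 0
  /-- Additivity property -/
  additivity : ∀ (X : Type) [TopologicalSpace X], IsFinitePolyhedron X →
    ∀ (f : C(X, X)) (W : Set X) (ι : Type) (_ : Finite ι) (U : ι → Set X),
      IsOpen W → (∀ i, IsOpen (U i)) → Pairwise (Function.onFun Disjoint U) →
      (∀ i, U i ⊆ W) → (∀ x ∈ W, f x = x → ∃ i, x ∈ U i) →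
      index X f W = ∑ᶠ i, index X f (U i)
  /-- Excision property -/
  excision : ∀ (X : Type) [TopologicalSpace X], IsFinitePolyhedron X →
    ∀ (f : C(X, X)) (U V : Set X), IsOpen U → IsOpen V → V ⊆ U →
      (∀ x ∈ U, f x = x → x ∈ V) → index X f U = index X f V
  /-- Commutativity property -/
  commutativity : ∀ (X Y : Type) [TopologicalSpace X] [TopologicalSpace Y],
    IsFinitePolyhedron X → IsFinitePolyhedron Y →
    ∀ (f : C(X, Y)) (g : C(Y, X)),
      index X (g.comp f) Set.univ = index Y (f.comp g) Set.univ

end Index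

section Relative

noncomputable def setIncl {X : Type} [TopologicalSpace X] (A : Set X) : C(A, X) :=
  ⟨Subtype.val, continuous_subtype_val⟩

noncomputable def RelChains (X : Type) [TopologicalSpace X] (A : Set X) :
    ChainComplex (ModuleCat ℚ) ℕ :=
  Limits.cokernel (SingularChainsMap (setIncl A))

noncomputable def RelHomology (X : Type) [TopologicalSpace X] (A : Set X) (n : ℕ) :
    ModuleCat ℚ :=
  (RelChains X A).homology n

noncomputable def RelHomologyMap {X : Type} [TopologicalSpace X] {A : Set X} (f : C(X, X))
    (hf : Set.MapsTo f A A) (n : ℕ) : RelHomology X A n ⟶ RelHomology X A n :=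
  HomologicalComplex.homologyMap
    (Limits.cokernel.map _ _ (SingularChainsMap (restrictSelf f A hf)) (SingularChainsMap f)
      (by
        rw [← SingularChainsMap_comp, ← SingularChainsMap_comp]
        congr 1)) n

noncomputable def RelLefschetzNumber {X : Type} [TopologicalSpace X] {A : Set X} (f : C(X, X))
    (hf : Set.MapsTo f A A) : ℚ :=
  ∑ᶠ n : ℕ, (-1 : ℚ) ^ n * LinearMap.trace ℚ (RelHomology X A n) (RelHomologyMap f hf n).hom

end Relative

/-! Collapsing the whole of a one-point space `P` gives the cofibration `P → P → P/P` of
one-point spaces, so the Cofibration Axiom reads `λ(id) = λ(id) + λ(id)` once the Commutativity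
Axiom has identified the values of `λ` on all one-point spaces. Hence `λ` vanishes on one-point
spaces, and a constant map `X → X` factors through a point. -/

namespace Geometry.SimplicialComplex

variable {𝕜 E : Type*} [Ring 𝕜] [PartialOrder 𝕜] [AddCommGroup E] [Module 𝕜 E]

variable (𝕜) in
def point (x : E) : SimplicialComplex 𝕜 E where
  faces := {{x}}
  isRelLowerSet_faces := by
    rintro s rfl
    refine ⟨Finset.singleton_nonempty x, fun t hts ht => ?_⟩
    rcases Finset.subset_singleton_iff.mp hts with rfl | rfl
    · exact absurd ht Finset.not_nonempty_empty
    · rfl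
  indep := by
    rintro s rfl
    exact affineIndependent_of_subsingleton 𝕜 _
  inter_subset_convexHull := by
    rintro s t rfl rfl
    simp

@[simp]
theorem space_point (x : E) : (point 𝕜 x).space = {x} := by
  simp [space, point]

end Geometry.SimplicialComplex

open Geometry Set

section OnePointSpaces

variable (P : Type) [TopologicalSpace P] [Subsingleton P] [Nonempty P]

theorem isFinitePolyhedron_of_subsingleton : IsFinitePolyhedron P := by
  inhabit P
  have : Unique P := Unique.mk' P
  exact ⟨0, SimplicialComplex.point ℝ 0, by simp [SimplicialComplex.point],
    ⟨(Homeomorph.homeomorphOfUnique P ({0} : Set _)).trans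
      (Homeomorph.setCongr (SimplicialComplex.space_point 0).symm)⟩⟩

theorem inC_of_subsingleton : InC P :=
  ⟨inferInstance, P, inferInstance, isFinitePolyhedron_of_subsingleton P,
    ⟨ContinuousMap.HomotopyEquiv.refl P⟩⟩

end OnePointSpaces

theorem IsFinitePolyhedron.isPolyhedralPair_univ {X : Type} [TopologicalSpace X]
    (hX : IsFinitePolyhedron X) : IsPolyhedralPair X univ := by
  obtain ⟨m, K, hK, ⟨e⟩⟩ := hX
  exact ⟨m, K, K, hK, subset_rfl, e, by simp [e.surjective.range_eq]⟩

instance {X : Type} [TopologicalSpace X] [Nonempty X] : Subsingleton (Collapse X univ) :=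
  ⟨fun a b => Quotient.inductionOn₂ a b fun _ _ => Quotient.sound (Or.inr ⟨trivial, trivial⟩)⟩

instance {X : Type} [TopologicalSpace X] [Nonempty X] : Nonempty (Collapse X univ) :=
  ⟨collapseProj X univ (Classical.arbitrary X)⟩

section OnePointValues

variable {lam : ∀ (X : Type) [TopologicalSpace X], C(X, X) → ℚ}

theorem CommutativityAxiom.apply_eq_of_subsingleton (hcomm : CommutativityAxiom lam)
    (P Q : Type) [TopologicalSpace P] [TopologicalSpace Q] [Subsingleton P] [Nonempty P]
    [Subsingleton Q] [Nonempty Q] (f : C(P, P)) (g : C(Q, Q)) : lam P f = lam Q g := by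
  let p : C(Q, P) := .const Q (Classical.arbitrary P)
  let q : C(P, Q) := .const P (Classical.arbitrary Q)
  rw [Subsingleton.elim f (p.comp q), Subsingleton.elim g (q.comp p)]
  exact hcomm P Q (inC_of_subsingleton P) (inC_of_subsingleton Q) q p

theorem apply_eq_zero_of_subsingleton (hcof : CofibrationAxiom lam)
    (hcomm : CommutativityAxiom lam) (P : Type) [TopologicalSpace P] [Subsingleton P]
    [Nonempty P] (f : C(P, P)) : lam P f = 0 := by
  have hsplit := hcof P univ (inC_of_subsingleton P) (inC_of_subsingleton _)
    (isFinitePolyhedron_of_subsingleton P).isPolyhedralPair_univ f (mapsTo_univ f univ)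
  rw [hcomm.apply_eq_of_subsingleton (univ : Set P) P _ f,
    hcomm.apply_eq_of_subsingleton (Collapse P univ) P _ f] at hsplit
  linarith

end OnePointValues

theorem lam_const_eq_zero_general
    (lam : ∀ (X : Type) [TopologicalSpace X], C(X, X) → ℤ)
    (h2 : CofibrationAxiom (intValued lam))
    (h3 : CommutativityAxiom (intValued lam))
    (X : Type) [TopologicalSpace X] (hX : InC X) (x₀ : X) :
    lam X (ContinuousMap.const X x₀) = 0 := by
  have hfactor : ContinuousMap.const X x₀ =
      (ContinuousMap.const Unit x₀).comp (ContinuousMap.const X ()) := rfl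
  have hcomm := h3 X Unit hX (inC_of_subsingleton Unit) (.const X ()) (.const Unit x₀)
  rw [← hfactor, apply_eq_zero_of_subsingleton h2 h3 Unit] at hcomm
  exact Int.cast_eq_zero.mp hcomm

/-- If `λ` is an integer-valued function on self-maps of spaces in `𝒞` satisfying the Homotopy,
Cofibration and Commutativity axioms, then `λ` of any constant self-map is zero. -/
theorem lam_const_eq_zero
    (lam : ∀ (X : Type) [TopologicalSpace X], C(X, X) → ℤ)
    (h1 : HomotopyAxiom (intValued lam)) (h2 : CofibrationAxiom (intValued lam))
    (h3 : CommutativityAxiom (intValued lam))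
    (X : Type) [TopologicalSpace X] (hX : InC X) (x₀ : X) :
    lam X (ContinuousMap.const X x₀) = 0 :=
  lam_const_eq_zero_general lam h2 h3 X hX x₀
end
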